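/- For every λ = (λ1,λ2) ∈ ℕ₀², there exists a unique polynomial P_λ(s,t) ∈ ℤ[s,t] such that, in the fraction field of ℤ[x,y], P_λ(x/y², y/x²) = x^{−λ1}·y^{−λ2}·Q_λ(x,y). -/
import Mathlib


open MvPolynomial

noncomputable section

abbrev Rxy : Type := MvPolynomial (Fin 2) ℤ

/-- The fraction field of ℤ[x,y]. -/
abbrev Kxy : Type := FractionRing Rxy

/-- The image of `x` in the fraction field. -/
noncomputable def xx : Kxy := algebraMap Rxy Kxy (X 0)

/-- The image of `y` in the fraction field. -/
noncomputable def yy : Kxy := algebraMap Rxy Kxy (X 1)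

/-- `s = x / y²`. -/
noncomputable def sv : Kxy := xx / yy ^ 2

/-- `t = y / x²`. -/
noncomputable def tv : Kxy := yy / xx ^ 2

/-- Evaluation of a two-variable integer polynomial at `(s, t)` in the fraction field. -/
noncomputable def evST (p : Rxy) : Kxy := aeval ![sv, tv] p

/-- Defining properties of the SU(3) character polynomials `Q a b`
(with the convention `Q a b = 0` whenever `(a, b) ∉ ℕ₀²`). -/
def IsQSU3 (Q : ℤ → ℤ → Rxy) : Prop :=
  (∀ a b : ℤ, (a < 0 ∨ b < 0) → Q a b = 0) ∧
  Q 0 0 = 1 ∧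
  Q 1 0 = X 0 ∧
  (∀ a b : ℤ, 0 ≤ a → 0 ≤ b →
    X 0 * Q a b = Q (a + 1) b + Q a (b - 1) + Q (a - 1) (b + 1)) ∧
  (∀ a b : ℤ, rename (Equiv.swap (0 : Fin 2) 1) (Q a b) = Q b a)

/-- Defining property of the polynomials `P a b` (in the variables `s, t`), namely
`P_λ(x/y², y/x²) = x^{-λ₁} y^{-λ₂} Q_λ(x,y)` in the fraction field of ℤ[x,y]
(with the convention `P a b = 0` whenever `(a, b) ∉ ℕ₀²`). -/
def IsPSU3 (Q P : ℤ → ℤ → Rxy) : Prop :=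
  (∀ a b : ℤ, (a < 0 ∨ b < 0) → P a b = 0) ∧
  (∀ a b : ℤ, 0 ≤ a → 0 ≤ b →
    evST (P a b) = algebraMap Rxy Kxy (Q a b) / (xx ^ a * yy ^ b))

lemma amap_inj : Function.Injective (algebraMap Rxy Kxy) := IsFractionRing.injective Rxy Kxy

lemma xx_ne : xx ≠ 0 := by
  simp only [xx, ne_eq, map_eq_zero_iff _ amap_inj]
  exact X_ne_zero 0

lemma yy_ne : yy ≠ 0 := by
  simp only [yy, ne_eq, map_eq_zero_iff _ amap_inj]
  exact X_ne_zero 1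

lemma amap_eq (p : Rxy) : algebraMap Rxy Kxy p = aeval ![xx, yy] p := by
  have : (algebraMap Rxy Kxy) = (aeval ![xx, yy]).toRingHom := by
    apply ringHom_ext
    · intro r; simp [algebraMap_int_eq, map_intCast]
    · intro i; fin_cases i <;> simp [xx, yy]
  rw [this]; rfl

lemma evST_monomial (d : Fin 2 →₀ ℕ) (c : ℤ) :
    evST (monomial d c) = (c : Kxy) * sv ^ (d 0) * tv ^ (d 1) := by
  rw [evST, aeval_monomial, Finsupp.prod_fintype _ _ (by simp), Fin.prod_univ_two]
  simp [mul_assoc]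

lemma amap_monomial (d : Fin 2 →₀ ℕ) (c : ℤ) :
    algebraMap Rxy Kxy (monomial d c) = (c : Kxy) * xx ^ (d 0) * yy ^ (d 1) := by
  rw [amap_eq, aeval_monomial, Finsupp.prod_fintype _ _ (by simp), Fin.prod_univ_two]
  simp [mul_assoc]

set_option synthInstance.maxHeartbeats 1000000 in
set_option maxHeartbeats 1000000 in
lemma key (n d0 d1 : ℕ) (h0 : d0 ≤ n) (h1 : d1 ≤ n) :
    (xx*yy)^(2*n) * (sv ^ d0 * tv ^ d1) = xx ^ (d0+2*n-2*d1) * yy ^ (d1+2*n-2*d0) := by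
  have hx := xx_ne; have hy := yy_ne
  have main : xx^(2*n) * yy^(2*n) * (xx^d0 * yy^d1)
      = (xx ^ (d0+2*n-2*d1) * yy ^ (d1+2*n-2*d0)) * (yy^(2*d0) * xx^(2*d1)) := by
    rw [show xx^(2*n) * yy^(2*n) * (xx^d0*yy^d1) = xx^(2*n+d0) * yy^(2*n+d1) by
      rw [pow_add, pow_add]; ring]
    rw [show 2*n+d0 = (d0+2*n-2*d1) + 2*d1 by omega, show 2*n+d1 = (d1+2*n-2*d0) + 2*d0 by omega,
      pow_add, pow_add]
    ring
  rw [mul_pow, sv, tv, div_pow, div_pow, ← pow_mul, ← pow_mul]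
  field_simp
  linear_combination main

lemma apply_le_sum (d : Fin 2 →₀ ℕ) (i : Fin 2) : d i ≤ d.sum fun _ e => e := by
  by_cases h : d i = 0
  · simp [h]
  · exact Finset.single_le_sum (f := fun a => d a) (fun _ _ => Nat.zero_le _)
      (Finsupp.mem_support_iff.2 h)

def Fm (n : ℕ) (d : Fin 2 →₀ ℕ) : Fin 2 →₀ ℕ :=
  Finsupp.single 0 (d 0 + 2*n - 2*(d 1)) + Finsupp.single 1 (d 1 + 2*n - 2*(d 0))

lemma Fm0 (n : ℕ) (d : Fin 2 →₀ ℕ) : Fm n d 0 = d 0 + 2*n - 2*(d 1) := by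
  simp [Fm, Finsupp.single_apply]
lemma Fm1 (n : ℕ) (d : Fin 2 →₀ ℕ) : Fm n d 1 = d 1 + 2*n - 2*(d 0) := by
  simp [Fm, Finsupp.single_apply]

set_option synthInstance.maxHeartbeats 1000000 in
set_option maxHeartbeats 1000000 in
lemma evST_injective : Function.Injective evST := by
  have h0 : ∀ p : Rxy, evST p = 0 → p = 0 := by
    intro p hp
    set n := p.totalDegree with hn
    have hbd : ∀ d ∈ p.support, d 0 ≤ n ∧ d 1 ≤ n := by
      intro d hd
      have h := le_totalDegree hd
      exact ⟨le_trans (apply_le_sum d 0) h, le_trans (apply_le_sum d 1) h⟩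
    set q : Rxy := ∑ d ∈ p.support, monomial (Fm n d) (coeff d p) with hq
    have hmain : algebraMap Rxy Kxy q = (xx*yy)^(2*n) * evST p := by
      rw [hq, map_sum]
      conv_rhs => rw [p.as_sum]
      rw [show evST (∑ v ∈ p.support, monomial v (coeff v p))
          = ∑ v ∈ p.support, evST (monomial v (coeff v p)) from map_sum (aeval ![sv,tv]) _ _,
        Finset.mul_sum]
      apply Finset.sum_congr rfl
      intro d hd
      rw [amap_monomial, evST_monomial, Fm0, Fm1]
      linear_combination (-((coeff d p : ℤ) : Kxy)) * key n (d 0) (d 1) (hbd d hd).1 (hbd d hd).2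
    rw [hp, mul_zero] at hmain
    have hq0 : q = 0 := amap_inj (by rw [hmain, map_zero])
    have hco : ∀ d ∈ p.support, coeff d p = 0 := by
      intro d hd
      have : coeff (Fm n d) q = coeff d p := by
        rw [hq, coeff_sum]
        rw [Finset.sum_eq_single_of_mem d hd]
        · rw [coeff_monomial, if_pos rfl]
        · intro d' hd' hne
          rw [coeff_monomial, if_neg]
          intro heq
          apply hne
          have e0 := DFunLike.congr_fun heq 0
          have e1 := DFunLike.congr_fun heq 1
          rw [Fm0, Fm0] at e0; rw [Fm1, Fm1] at e1
          have b1 := hbd d hd; have b2 := hbd d' hd'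
          have g0 : d' 0 = d 0 := by omega
          have g1 : d' 1 = d 1 := by omega
          ext i
          fin_cases i
          · exact g0
          · exact g1
      rw [hq0, coeff_zero] at this
      exact this.symm
    ext d
    by_cases hd : d ∈ p.support
    · simpa using hco d hd
    · simpa using notMem_support_iff.1 hd
  intro a b hab
  have : evST (a - b) = 0 := by
    have : evST (a - b) = evST a - evST b := map_sub (aeval ![sv,tv]) a b
    rw [this, hab, sub_self]
  exact sub_eq_zero.1 (h0 _ this)

set_option synthInstance.maxHeartbeats 1000000 in
set_option maxHeartbeats 1000000 in
noncomputable def tau : Kxy →+* Kxy :=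
  IsFractionRing.lift (g := (algebraMap Rxy Kxy).comp
    (rename (Equiv.swap (0 : Fin 2) 1)).toRingHom)
    (amap_inj.comp (rename_injective _ (Equiv.swap (0:Fin 2) 1).injective))

set_option synthInstance.maxHeartbeats 1000000 in
lemma tau_amap (p : Rxy) :
    tau (algebraMap Rxy Kxy p) = algebraMap Rxy Kxy (rename (Equiv.swap (0 : Fin 2) 1) p) :=
  IsFractionRing.lift_algebraMap _ p

lemma tau_xx : tau xx = yy := by
  rw [xx, tau_amap, rename_X]
  simp [yy]

lemma tau_yy : tau yy = xx := by
  rw [yy, tau_amap, rename_X]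
  simp [xx]

set_option synthInstance.maxHeartbeats 1000000 in
lemma tau_sv : tau sv = tv := by
  rw [sv, tv, map_div₀, map_pow, tau_xx, tau_yy]

set_option synthInstance.maxHeartbeats 1000000 in
lemma tau_tv : tau tv = sv := by
  rw [sv, tv, map_div₀, map_pow, tau_xx, tau_yy]

set_option synthInstance.maxHeartbeats 1000000 in
lemma evST_swap (p : Rxy) :
    evST (rename (Equiv.swap (0 : Fin 2) 1) p) = tau (evST p) := by
  have h : ((aeval ![sv, tv]).toRingHom.comp (rename (Equiv.swap (0 : Fin 2) 1)).toRingHom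
      : Rxy →+* Kxy) = tau.comp (aeval ![sv, tv]).toRingHom := by
    apply ringHom_ext
    · intro r
      simp only [RingHom.coe_comp, Function.comp_apply, AlgHom.toRingHom_eq_coe,
        RingHom.coe_coe, aeval_C, algebraMap_int_eq, eq_intCast, map_intCast]
    · intro i
      fin_cases i
      · simpa [Equiv.swap_apply_def] using tau_sv.symm
      · simpa [Equiv.swap_apply_def] using tau_tv.symm
  exact RingHom.congr_fun h p

lemma evST_sub (p q : Rxy) : evST (p - q) = evST p - evST q := map_sub (aeval ![sv,tv]) p q
lemma evST_one : evST 1 = 1 := map_one (aeval ![sv,tv])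
lemma evST_zero : evST 0 = 0 := map_zero (aeval ![sv,tv])
lemma evST_X0 (p : Rxy) : evST (X 0 * X 1 * p) = sv * tv * evST p := by
  simp only [evST, map_mul, aeval_X]
  norm_num
lemma evST_X1 (p : Rxy) : evST (X 1 * p) = tv * evST p := by
  simp only [evST, map_mul, aeval_X]
  norm_num

set_option synthInstance.maxHeartbeats 1000000 in
lemma hst : xx * yy * (sv * tv) = 1 := by
  rw [sv, tv]
  field_simp [xx_ne, yy_ne]

set_option synthInstance.maxHeartbeats 1000000 in
lemma hty : xx ^ 2 * tv = yy := by
  rw [tv, mul_comm, div_mul_cancel₀ _ (pow_ne_zero 2 xx_ne)]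

set_option synthInstance.maxHeartbeats 1000000 in
set_option maxHeartbeats 4000000 in
lemma exists_P (Q : ℤ → ℤ → Rxy) (hQ : IsQSU3 Q) :
    ∀ n : ℕ, ∀ a b : ℕ, a + b = n →
      ∃ p : Rxy, xx ^ a * yy ^ b * evST p = algebraMap Rxy Kxy (Q (a : ℤ) (b : ℤ)) := by
  obtain ⟨hzero, hinit, -, hrec, hswap⟩ := hQ
  intro n
  induction n using Nat.strong_induction_on with
  | _ n IH =>
  have hpos : ∀ a b : ℕ, a + b = n → 0 < a →
      ∃ p : Rxy, xx ^ a * yy ^ b * evST p = algebraMap Rxy Kxy (Q (a : ℤ) (b : ℤ)) := by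
    intro a b hab ha
    obtain ⟨a', rfl⟩ : ∃ a', a = a' + 1 := ⟨a - 1, by omega⟩
    obtain ⟨p1, e1⟩ := IH (a' + b) (by omega) a' b rfl
    have h2 : ∃ p2 : Rxy, xx ^ (a'+1) * yy ^ b * (sv * tv * evST p2)
        = algebraMap Rxy Kxy (Q (a' : ℤ) ((b : ℤ) - 1)) := by
      rcases Nat.eq_zero_or_pos b with rfl | hb
      · exact ⟨0, by rw [evST_zero, hzero _ _ (Or.inr (by norm_num))]; simp⟩
      · obtain ⟨b'', rfl⟩ : ∃ b'', b = b'' + 1 := ⟨b - 1, by omega⟩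
        obtain ⟨p2, e2⟩ := IH (a' + b'') (by omega) a' b'' rfl
        refine ⟨p2, ?_⟩
        have hc : ((b'' : ℤ) + 1) - 1 = (b'' : ℤ) := by ring
        push_cast
        rw [hc]
        calc xx ^ (a'+1) * yy ^ (b''+1) * (sv * tv * evST p2)
            = (xx * yy * (sv * tv)) * (xx ^ a' * yy ^ b'' * evST p2) := by ring
          _ = algebraMap Rxy Kxy (Q (a' : ℤ) (b'' : ℤ)) := by rw [hst, e2, one_mul]
    obtain ⟨p2, t2⟩ := h2
    have h3 : ∃ p3 : Rxy, xx ^ (a'+1) * yy ^ b * (tv * evST p3)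
        = algebraMap Rxy Kxy (Q ((a' : ℤ) - 1) ((b : ℤ) + 1)) := by
      rcases Nat.eq_zero_or_pos a' with rfl | ha'
      · exact ⟨0, by rw [evST_zero, hzero _ _ (Or.inl (by norm_num))]; simp⟩
      · obtain ⟨a'', rfl⟩ : ∃ a'', a' = a'' + 1 := ⟨a' - 1, by omega⟩
        obtain ⟨p3, e3⟩ := IH (a'' + (b+1)) (by omega) a'' (b+1) rfl
        refine ⟨p3, ?_⟩
        have hc : ((a'' : ℤ) + 1) - 1 = (a'' : ℤ) := by ring
        push_cast
        rw [hc]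
        push_cast at e3
        calc xx ^ (a''+1+1) * yy ^ b * (tv * evST p3)
            = (xx ^ 2 * tv) * (xx ^ a'' * yy ^ b * evST p3) := by ring
          _ = yy * (xx ^ a'' * yy ^ b * evST p3) := by rw [hty]
          _ = xx ^ a'' * yy ^ (b+1) * evST p3 := by ring
          _ = algebraMap Rxy Kxy (Q (a'' : ℤ) ((b : ℤ) + 1)) := e3
    obtain ⟨p3, t3⟩ := h3
    refine ⟨p1 - X 0 * X 1 * p2 - X 1 * p3, ?_⟩
    have hre := hrec (a' : ℤ) (b : ℤ) (Int.natCast_nonneg a') (Int.natCast_nonneg b)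
    have hQab : algebraMap Rxy Kxy (Q ((a':ℤ)+1) (b:ℤ))
        = xx * algebraMap Rxy Kxy (Q (a':ℤ) (b:ℤ))
          - algebraMap Rxy Kxy (Q (a':ℤ) ((b:ℤ)-1))
          - algebraMap Rxy Kxy (Q ((a':ℤ)-1) ((b:ℤ)+1)) := by
      have h : Q ((a':ℤ)+1) (b:ℤ) = X 0 * Q (a':ℤ) (b:ℤ) - Q (a':ℤ) ((b:ℤ)-1)
          - Q ((a':ℤ)-1) ((b:ℤ)+1) := by linear_combination -hre
      rw [h, map_sub, map_sub, map_mul]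
      rfl
    rw [evST_sub, evST_sub, evST_X0, evST_X1]
    push_cast
    rw [hQab]
    linear_combination xx * e1 - t2 - t3
  rcases Nat.eq_zero_or_pos n with rfl | hn
  · intro a b hab
    obtain ⟨rfl, rfl⟩ : a = 0 ∧ b = 0 := by omega
    exact ⟨1, by rw [evST_one]; norm_num [hinit]⟩
  · intro a b hab
    rcases Nat.eq_zero_or_pos a with rfl | ha
    · obtain ⟨p', e'⟩ := hpos b 0 (by omega) (by omega)
      refine ⟨rename (Equiv.swap (0 : Fin 2) 1) p', ?_⟩
      have := congrArg tau e'
      rw [map_mul, map_mul, map_pow, map_pow, tau_xx, tau_yy, ← evST_swap,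
        tau_amap, hswap] at this
      push_cast at this ⊢
      linear_combination this
    · exact hpos a b hab ha

theorem stmt_2 (Q : ℤ → ℤ → Rxy) (hQ : IsQSU3 Q) (l1 l2 : ℕ) :
    ∃! p : Rxy,
      evST p = algebraMap Rxy Kxy (Q (l1 : ℤ) (l2 : ℤ)) / (xx ^ (l1 : ℤ) * yy ^ (l2 : ℤ)) := by
  obtain ⟨p, hp⟩ := exists_P Q hQ (l1 + l2) l1 l2 rfl
  have hne : (xx ^ l1 * yy ^ l2) ≠ 0 := mul_ne_zero (pow_ne_zero _ xx_ne) (pow_ne_zero _ yy_ne)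
  have hp' : evST p = algebraMap Rxy Kxy (Q (l1 : ℤ) (l2 : ℤ)) / (xx ^ (l1:ℤ) * yy ^ (l2:ℤ)) := by
    rw [zpow_natCast, zpow_natCast, eq_div_iff hne]
    linear_combination hp
  exact ⟨p, hp', fun q hq => evST_injective (by rw [hq, hp'])⟩
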